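/- Let f : ℝⁿ → ℝ be (2,L₁)-smooth and let δ > 0. Then for every x ∈ ℝⁿ, the gradient of f averaged over the ball of radius δ satisfies ‖ (1/(δⁿVₙ)) ∫_{δBⁿ} ∇f(x+u) du − ∇f(x) ‖ ≤ L₁ n δ/(n+1). -/

import Mathlib

/-! Since `∇f` is `L₁`-Lipschitz, the averaged gradient deviates from `∇f x` by at most `L₁` times
the mean distance to the centre of a point of `δBⁿ`, which polar coordinates give as
`nδ/(n+1)`. -/

open MeasureTheory

noncomputable section

/-- The uniform probability measure on the unit sphere `S^{n-1} ⊆ ℝⁿ`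
(the normalized rotation-invariant surface measure), viewed as a measure on
the ambient Euclidean space. -/
def sphereUniform (n : ℕ) : Measure (EuclideanSpace ℝ (Fin n)) :=
  Measure.map Subtype.val
    ((((volume : Measure (EuclideanSpace ℝ (Fin n))).toSphere) Set.univ)⁻¹ •
      (volume : Measure (EuclideanSpace ℝ (Fin n))).toSphere)

/-- `f : ℝⁿ → ℝ` is `(p, L)`-smooth: it is `p` times continuously differentiable and
`sup_{‖u‖=1} |(∂^{p-1}f(x) - ∂^{p-1}f(x'))[u,…,u]| ≤ L‖x - x'‖` for all `x, x'`. -/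
def IsPLSmooth {n : ℕ} (p : ℕ) (L : ℝ) (f : EuclideanSpace ℝ (Fin n) → ℝ) : Prop :=
  ContDiff ℝ p f ∧
    ∀ x x' u : EuclideanSpace ℝ (Fin n), ‖u‖ = 1 →
      |iteratedFDeriv ℝ (p - 1) f x (fun _ => u) - iteratedFDeriv ℝ (p - 1) f x' (fun _ => u)|
        ≤ L * ‖x - x'‖

/-- The stochastic zeroth-order gradient estimator
`∇̂f_k^δ(x) = (n/(2δk)) ∑ᵢ (f(x+δvᵢ) - f(x-δvᵢ)) vᵢ`. -/
def gradEst {n : ℕ} (k : ℕ) (δ : ℝ) (f : EuclideanSpace ℝ (Fin n) → ℝ)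
    (vs : Fin k → EuclideanSpace ℝ (Fin n)) (x : EuclideanSpace ℝ (Fin n)) :
    EuclideanSpace ℝ (Fin n) :=
  ((n : ℝ) / (2 * δ * k)) • ∑ i, (f (x + δ • vs i) - f (x - δ • vs i)) • vs i

/-- The stochastic zeroth-order Hessian estimator
`Ĥf_k^δ(x) = (n²/(8δ²k²)) ∑ᵢⱼ (f(x+δvᵢ+δwⱼ) - f(x-δvᵢ+δwⱼ) - f(x+δvᵢ-δwⱼ) + f(x-δvᵢ-δwⱼ))
  (vᵢwⱼᵀ + wⱼvᵢᵀ)`. -/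
def hessEst {n : ℕ} (k : ℕ) (δ : ℝ) (f : EuclideanSpace ℝ (Fin n) → ℝ)
    (vs ws : Fin k → EuclideanSpace ℝ (Fin n)) (x : EuclideanSpace ℝ (Fin n)) :
    Matrix (Fin n) (Fin n) ℝ :=
  ((n : ℝ) ^ 2 / (8 * δ ^ 2 * k ^ 2)) •
    ∑ i, ∑ j,
      (f (x + δ • vs i + δ • ws j) - f (x - δ • vs i + δ • ws j)
          - f (x + δ • vs i - δ • ws j) + f (x - δ • vs i - δ • ws j)) •
        (Matrix.vecMulVec (vs i) (ws j) + Matrix.vecMulVec (ws j) (vs i))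

/-- The Hessian matrix `∇²f(x)` of `f` at `x`, with entries
`(∂²f(x))[eᵢ, eⱼ]` in the standard basis. -/
def hessMat {n : ℕ} (f : EuclideanSpace ℝ (Fin n) → ℝ)
    (x : EuclideanSpace ℝ (Fin n)) : Matrix (Fin n) (Fin n) ℝ :=
  Matrix.of fun i j =>
    iteratedFDeriv ℝ 2 f x ![EuclideanSpace.single i 1, EuclideanSpace.single j 1]

/-- The spectral (operator) norm of an `n × n` real matrix. -/
def specNorm {n : ℕ} (M : Matrix (Fin n) (Fin n) ℝ) : ℝ :=
  ‖Matrix.toEuclideanCLM (𝕜 := ℝ) M‖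

/-- The square of the Frobenius norm of a matrix. -/
def frobSq {n : ℕ} (M : Matrix (Fin n) (Fin n) ℝ) : ℝ :=
  ∑ i, ∑ j, (M i j) ^ 2

/-- `Vₙ`, the Lebesgue volume of the closed unit ball in `ℝⁿ`. -/
def unitBallVol (n : ℕ) : ℝ :=
  (volume (Metric.closedBall (0 : EuclideanSpace ℝ (Fin n)) 1)).toReal

/-- `f^δ(x) = (1/(δⁿVₙ)) ∫_{δBⁿ} f(x+u) du`, the average of `f` over the ball
of radius `δ` centered at `x`. -/
def ballAvg {n : ℕ} (δ : ℝ) (f : EuclideanSpace ℝ (Fin n) → ℝ)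
    (y : EuclideanSpace ℝ (Fin n)) : ℝ :=
  (δ ^ n * unitBallVol n)⁻¹ *
    ∫ u in Metric.closedBall (0 : EuclideanSpace ℝ (Fin n)) δ, f (y + u)

/-- `f̃^δ(x) = (1/(δⁿVₙ))² ∫_{δBⁿ} ∫_{δBⁿ} f(x+u+u') du du'`, the double average of `f`
over two balls of radius `δ`. -/
def doubleBallAvg {n : ℕ} (δ : ℝ) (f : EuclideanSpace ℝ (Fin n) → ℝ)
    (y : EuclideanSpace ℝ (Fin n)) : ℝ :=
  ((δ ^ n * unitBallVol n)⁻¹) ^ 2 *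
    ∫ u in Metric.closedBall (0 : EuclideanSpace ℝ (Fin n)) δ,
      ∫ u' in Metric.closedBall (0 : EuclideanSpace ℝ (Fin n)) δ, f (y + u + u')

end

open Metric Set Module MeasureTheory.Measure

namespace MeasureTheory

variable {E : Type*} [NormedAddCommGroup E] [NormedSpace ℝ E] [FiniteDimensional ℝ E]
  [MeasurableSpace E] [BorelSpace E] [Nontrivial E] (μ : Measure E) [μ.IsAddHaarMeasure]

theorem setIntegral_closedBall_zero_norm {r : ℝ} (hr : 0 ≤ r) :
    ∫ x in closedBall (0 : E) r, ‖x‖ ∂μ =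
      finrank ℝ E / (finrank ℝ E + 1) * r ^ (finrank ℝ E + 1) * μ.real (closedBall 0 1) := by
  have hd : finrank ℝ E ≠ 0 := finrank_pos.ne'
  have key := integral_fun_norm_addHaar μ ((Iic r).indicator id)
  have hball : (fun x : E => (Iic r).indicator id ‖x‖) = (closedBall 0 r).indicator norm := by
    ext x
    simp [indicator]
  rw [hball, integral_indicator measurableSet_closedBall] at key
  have hradial : ∫ y in Ioi (0 : ℝ), y ^ (finrank ℝ E - 1) • (Iic r).indicator id y =
      r ^ (finrank ℝ E + 1) / (finrank ℝ E + 1) := by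
    have hpow : ∀ y : ℝ, y ^ (finrank ℝ E - 1) • (Iic r).indicator id y =
        (Iic r).indicator (· ^ finrank ℝ E) y := by
      intro y
      simp [indicator_apply, pow_sub_one_mul hd]
    simp_rw [hpow]
    rw [setIntegral_indicator measurableSet_Iic, Ioi_inter_Iic,
      ← intervalIntegral.integral_of_le hr, integral_pow]
    simp
  rw [key, hradial, addHaar_real_closedBall_eq_addHaar_real_ball, nsmul_eq_mul, smul_eq_mul]
  ring

theorem norm_setAverage_closedBall_zero_sub_le {F : Type*} [NormedAddCommGroup F]
    [NormedSpace ℝ F] [CompleteSpace F] {g : E → F} {L r : ℝ} (hr : 0 < r)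
    (hg : IntegrableOn g (closedBall 0 r) μ)
    (hL : ∀ u ∈ closedBall (0 : E) r, ‖g u - g 0‖ ≤ L * ‖u‖) :
    ‖(⨍ u in closedBall 0 r, g u ∂μ) - g 0‖ ≤ L * finrank ℝ E * r / (finrank ℝ E + 1) := by
  have hB : 0 < μ.real (closedBall (0 : E) 1) :=
    ENNReal.toReal_pos (measure_closedBall_pos μ 0 one_pos).ne' measure_closedBall_lt_top.ne
  have hV : 0 < μ.real (closedBall (0 : E) r) := by
    rw [addHaar_real_closedBall' μ 0 hr.le]
    positivity
  have hcenter : (⨍ u in closedBall 0 r, g u ∂μ) - g 0 =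
      (μ.real (closedBall (0 : E) r))⁻¹ • ∫ u in closedBall 0 r, (g u - g 0) ∂μ := by
    rw [setAverage_eq, integral_sub hg (integrableOn_const measure_closedBall_lt_top.ne),
      setIntegral_const, smul_sub, smul_smul, inv_mul_cancel₀ hV.ne', one_smul]
  have hbound : ‖∫ u in closedBall 0 r, (g u - g 0) ∂μ‖ ≤ ∫ u in closedBall 0 r, L * ‖u‖ ∂μ :=
    norm_integral_le_of_norm_le
      ((continuous_const.mul continuous_norm).continuousOn.integrableOn_compact
        (isCompact_closedBall _ _))
      (ae_restrict_of_forall_mem measurableSet_closedBall hL)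
  calc ‖(⨍ u in closedBall 0 r, g u ∂μ) - g 0‖
      ≤ (μ.real (closedBall (0 : E) r))⁻¹ * ∫ u in closedBall 0 r, L * ‖u‖ ∂μ := by
        rw [hcenter, norm_smul, Real.norm_of_nonneg (inv_nonneg.2 hV.le)]
        gcongr
    _ = L * finrank ℝ E * r / (finrank ℝ E + 1) := by
        rw [integral_const_mul, setIntegral_closedBall_zero_norm μ hr.le,
          addHaar_real_closedBall' μ 0 hr.le]
        field_simp
        ring

end MeasureTheory

namespace IsPLSmooth

variable {n : ℕ} {L : ℝ} {f : EuclideanSpace ℝ (Fin n) → ℝ}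

theorem abs_fderiv_apply_sub_le (hf : IsPLSmooth 2 L f) (a b : EuclideanSpace ℝ (Fin n))
    {u : EuclideanSpace ℝ (Fin n)} (hu : ‖u‖ = 1) :
    |fderiv ℝ f a u - fderiv ℝ f b u| ≤ L * ‖a - b‖ := by
  simpa only [Nat.add_one_sub_one, iteratedFDeriv_one_apply] using hf.2 a b u hu

theorem norm_fderiv_sub_le (hf : IsPLSmooth 2 L f) (a b : EuclideanSpace ℝ (Fin n)) :
    ‖fderiv ℝ f a - fderiv ℝ f b‖ ≤ L * ‖a - b‖ := by
  rcases eq_or_ne a b with rfl | hab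
  · simp
  have hnonneg : 0 ≤ L * ‖a - b‖ := (abs_nonneg _).trans
    (hf.abs_fderiv_apply_sub_le a b (norm_smul_inv_norm (𝕜 := ℝ) (sub_ne_zero.2 hab)))
  exact ContinuousLinearMap.opNorm_le_of_unit_norm hnonneg fun u hu =>
    hf.abs_fderiv_apply_sub_le a b hu

theorem norm_gradient_sub_le (hf : IsPLSmooth 2 L f) (a b : EuclideanSpace ℝ (Fin n)) :
    ‖gradient f a - gradient f b‖ ≤ L * ‖a - b‖ := by
  rw [gradient, gradient, ← map_sub, LinearIsometryEquiv.norm_map]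
  exact hf.norm_fderiv_sub_le a b

theorem continuous_gradient (hf : IsPLSmooth 2 L f) : Continuous (gradient f) :=
  (InnerProductSpace.toDual ℝ _).symm.continuous.comp (hf.1.continuous_fderiv two_ne_zero)

end IsPLSmooth

/-- If `f` is `(2,L₁)`-smooth, the gradient of `f` averaged over the
ball of radius `δ` is within `L₁nδ/(n+1)` of `∇f(x)`. -/
theorem ball_averaged_gradient_close {n : ℕ} {δ L₁ : ℝ} (hδ : 0 < δ)
    {f : EuclideanSpace ℝ (Fin n) → ℝ} (hf : IsPLSmooth 2 L₁ f)
    (x : EuclideanSpace ℝ (Fin n)) :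
    ‖(δ ^ n * unitBallVol n)⁻¹ •
        (∫ u in Metric.closedBall (0 : EuclideanSpace ℝ (Fin n)) δ, gradient f (x + u))
      - gradient f x‖ ≤ L₁ * n * δ / ((n : ℝ) + 1) := by
  rcases Nat.eq_zero_or_pos n with rfl | hn
  · simp [Subsingleton.elim _ (0 : EuclideanSpace ℝ (Fin 0))]
  have : Nonempty (Fin n) := ⟨⟨0, hn⟩⟩
  have hvol : δ ^ n * unitBallVol n =
      volume.real (closedBall (0 : EuclideanSpace ℝ (Fin n)) δ) := by
    rw [addHaar_real_closedBall' _ _ hδ.le, finrank_euclideanSpace_fin]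
    rfl
  have hcont : Continuous fun u => gradient f (x + u) :=
    hf.continuous_gradient.comp (continuous_const_add x)
  rw [hvol, ← setAverage_eq]
  simpa only [finrank_euclideanSpace_fin, add_zero] using
    norm_setAverage_closedBall_zero_sub_le volume hδ
      (hcont.continuousOn.integrableOn_compact (isCompact_closedBall _ _))
      fun u _ => by
        simpa only [add_zero, add_sub_cancel_left] using hf.norm_gradient_sub_le (x + u) x
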